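/- Let R be a commutative ring with unity, k ∈ ℕ, and I_0,I_1,…,I_k be mutually co-maximal ideals of R, each of which is contained in only finitely many maximal ideals. Let m^i_j ∈ ℕ for 0 ≤ i,j ≤ k be such that there is a permutation σ of {0,1,…,k} with m^i_{σ(i)} = 1 for each 0 ≤ i ≤ k. Then the row map SL_{k+1}(R) → ∏_{i=0}^{k} PF^{k,(m^i_0,…,m^i_k)}_{I_i} is surjective. In particular, if m^i_j = 1 for all 0 ≤ i,j ≤ k (the case of usual projective spaces), the map is surjective. -/

import Mathlib

/-- A vector `(a_0, …, a_k) ∈ R^{k+1}` is unital if `(a_0) + (a_1) + ⋯ + (a_k) = R`. -/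
def IsUnitalVector {R : Type*} [CommRing R] {n : ℕ} (v : Fin n → R) : Prop :=
  ∑ i, Ideal.span {v i} = ⊤

/-- The relation `∼^{k,(m_0,…,m_k)}_I` on unital vectors:
`(a_i) ∼ (b_i)` iff there is `λ ∈ R`, a unit modulo `I`, with `a_i ≡ λ^{m_i} b_i mod I`
for all `i`.  (When `I = ⊤` this relation is total, matching the convention that the
generalized projective space of the unit ideal is a single point.) -/
def ProjRel (R : Type*) [CommRing R] {n : ℕ} (m : Fin n → ℕ) (I : Ideal R)
    (a b : {v : Fin n → R // IsUnitalVector v}) : Prop :=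
  ∃ lam : R, IsUnit (Ideal.Quotient.mk I lam) ∧ ∀ i, a.1 i - lam ^ m i * b.1 i ∈ I

/-- The generalized projective space `PF^{k,(m_0,…,m_k)}_I`: the quotient of the set of
unital `(k+1)`-vectors by the relation `∼^{k,(m_0,…,m_k)}_I`. -/
def GenProjSpace (R : Type*) [CommRing R] {n : ℕ} (m : Fin n → ℕ) (I : Ideal R) :=
  Quot (ProjRel R m I)

/-!
Take `λ = 1`: it suffices to find `A ∈ SL_{k+1}(R)` whose `i`-th row is congruent modulo `I_i`
to a chosen representative `a_i` of the `i`-th class. Since `R ⧸ I_i` has only finitely many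
maximal ideals it has stable range one, so for `k ≥ 1` the reduction of `a_i` can be moved to the
`i`-th unit vector by transvections; hence it is the `i`-th row of an elementary matrix `E_i` over
`R ⧸ I_i`. By the Chinese remainder theorem a transvection over `∏ R ⧸ I_l` concentrated in one
factor lifts to a transvection over `R`, so the tuple `(E_i)` is the reduction of a single
`A ∈ SL_{k+1}(R)`. For `k = 0` the hypothesis on `σ` says `m_0 = 1`, and then every class of
unital `1`-vectors (units) is the same point.
-/

open Matrix

section UnitalVector

variable {R S : Type*} [CommRing R] [CommRing S] {n : ℕ}

theorem isUnitalVector_iff_span_range {v : Fin n → R} :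
    IsUnitalVector v ↔ Ideal.span (Set.range v) = ⊤ := by
  rw [IsUnitalVector, Ideal.sum_eq_sup, Finset.sup_univ_eq_iSup, ← Ideal.span_iUnion,
    ← Set.range_eq_iUnion]

theorem isUnitalVector_iff_exists_sum_mul_eq_one {v : Fin n → R} :
    IsUnitalVector v ↔ ∃ c : Fin n → R, ∑ i, c i * v i = 1 := by
  rw [isUnitalVector_iff_span_range, Ideal.eq_top_iff_one, Ideal.mem_span_range_iff_exists_fun]

theorem IsUnitalVector.map {v : Fin n → R} (hv : IsUnitalVector v) (f : R →+* S) :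
    IsUnitalVector (f ∘ v) := by
  obtain ⟨c, hc⟩ := isUnitalVector_iff_exists_sum_mul_eq_one.1 hv
  exact isUnitalVector_iff_exists_sum_mul_eq_one.2
    ⟨f ∘ c, by simp only [Function.comp_apply, ← map_mul, ← map_sum, hc, map_one]⟩

theorem isUnitalVector_row (A : SpecialLinearGroup (Fin n) R) (i : Fin n) :
    IsUnitalVector fun j => A.1 i j := by
  refine isUnitalVector_iff_exists_sum_mul_eq_one.2 ⟨fun j => adjugate A.1 j i, ?_⟩
  have h := congrFun (congrFun (mul_adjugate A.1) i) i
  simp only [mul_apply, A.2, one_smul, one_apply_eq] at h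
  simpa only [mul_comm] using h

end UnitalVector

namespace Matrix

variable {ι : Type*} [DecidableEq ι] {R S : Type*} [CommRing R] [CommRing S]

theorem transvection_map (f : R →+* S) (p q : ι) (c : R) :
    (transvection p q c).map f = transvection p q (f c) := by
  ext a b
  simp [transvection, one_apply, single_apply, apply_ite f]

variable [Fintype ι]

theorem vecMul_transvection (v : ι → R) (p q : ι) (c : R) :
    v ᵥ* transvection p q c = v + Pi.single q (v p * c) := by
  rw [transvection, vecMul_add, vecMul_one]
  ext r
  by_cases hq : q = r <;> simp [single_apply, vecMul, dotProduct, eq_comm, hq]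

namespace TransvectionStruct

def toSL (t : TransvectionStruct ι R) : SpecialLinearGroup ι R :=
  ⟨t.toMatrix, t.det⟩

end TransvectionStruct

variable (ι R) in
def elementarySubgroup : Subgroup (SpecialLinearGroup ι R) :=
  Subgroup.closure (Set.range TransvectionStruct.toSL)

theorem transvection_mem_elementarySubgroup {p q : ι} (hpq : p ≠ q) (c : R) :
    (⟨transvection p q c, det_transvection_of_ne p q hpq c⟩ : SpecialLinearGroup ι R) ∈
      elementarySubgroup ι R :=
  Subgroup.subset_closure ⟨⟨p, q, hpq, c⟩, rfl⟩

def ElementaryEquiv (v w : ι → R) : Prop :=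
  ∃ E ∈ elementarySubgroup ι R, v ᵥ* E.1 = w

namespace ElementaryEquiv

theorem refl (v : ι → R) : ElementaryEquiv v v :=
  ⟨1, one_mem _, vecMul_one v⟩

theorem trans {u v w : ι → R} (huv : ElementaryEquiv u v) (hvw : ElementaryEquiv v w) :
    ElementaryEquiv u w := by
  obtain ⟨E, hE, rfl⟩ := huv
  obtain ⟨F, hF, rfl⟩ := hvw
  exact ⟨E * F, mul_mem hE hF, by rw [SpecialLinearGroup.coe_mul, vecMul_vecMul]⟩

theorem symm {v w : ι → R} (h : ElementaryEquiv v w) : ElementaryEquiv w v := by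
  obtain ⟨E, hE, rfl⟩ := h
  refine ⟨E⁻¹, inv_mem hE, ?_⟩
  rw [vecMul_vecMul, ← SpecialLinearGroup.coe_mul, mul_inv_cancel, SpecialLinearGroup.coe_one,
    vecMul_one]

theorem add_single {p q : ι} (hpq : p ≠ q) (v : ι → R) (c : R) :
    ElementaryEquiv v (v + Pi.single q (v p * c)) :=
  ⟨_, transvection_mem_elementarySubgroup hpq c, vecMul_transvection v p q c⟩

theorem add_single_sum (i : ι) (v c : ι → R) (hc : c i = 0) :
    ElementaryEquiv v (v + Pi.single i (∑ j, v j * c j)) := by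
  classical
  suffices ∀ s : Finset ι, ElementaryEquiv v (v + Pi.single i (∑ j ∈ s, v j * c j)) from this _
  intro s
  induction s using Finset.induction with
  | empty => simpa using refl v
  | @insert a s ha ih =>
    refine ih.trans ?_
    rw [Finset.sum_insert ha, add_comm (v a * c a), Pi.single_add, ← add_assoc]
    obtain rfl | hai := eq_or_ne a i
    · simpa [hc] using refl _
    · have h := add_single hai (v + Pi.single i (∑ j ∈ s, v j * c j)) (c a)
      rwa [Pi.add_apply, Pi.single_eq_of_ne hai, add_zero] at h

theorem add_smul (i : ι) (v d : ι → R) (hd : d i = 0) :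
    ElementaryEquiv v (v + v i • d) := by
  classical
  suffices ∀ s : Finset ι, ElementaryEquiv v (v + v i • ∑ j ∈ s, Pi.single j (d j)) by
    simpa only [Finset.univ_sum_single] using this Finset.univ
  intro s
  induction s using Finset.induction with
  | empty => simpa using refl v
  | @insert a s ha ih =>
    refine ih.trans ?_
    rw [Finset.sum_insert ha, smul_add, add_comm (v i • _), ← add_assoc]
    obtain rfl | hia := eq_or_ne a i
    · simpa [hd] using refl _
    · have hw : (v + v i • ∑ j ∈ s, Pi.single j (d j)) i = v i := by
        simp [Finset.sum_apply, Pi.single_apply, hd]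
      have h := add_single hia.symm (v + v i • ∑ j ∈ s, Pi.single j (d j)) (d a)
      rwa [hw, ← smul_eq_mul, Pi.single_smul'] at h

theorem single_of_apply_eq_one {i : ι} {v : ι → R} (hv : v i = 1) :
    ElementaryEquiv v (Pi.single i 1) := by
  have h := add_smul i v (Pi.single i 1 - v) (by simp [hv])
  rwa [hv, one_smul, add_sub_cancel] at h

theorem single_of_isUnit [Nontrivial ι] {i : ι} {v : ι → R} (hv : IsUnit (v i)) :
    ElementaryEquiv v (Pi.single i 1) := by
  obtain ⟨u, hu⟩ := hv
  obtain ⟨p, hp⟩ := exists_ne i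
  set w := v + Pi.single p (v i * (↑u⁻¹ * (1 - v p)))
  have hwp : w p = 1 := by simp [w, ← hu]
  have hwi : w i = v i := by simp [w, hp.symm]
  refine (add_single hp.symm v _).trans <| (add_single hp w (1 - v i)).trans <|
    single_of_apply_eq_one ?_
  simp [hwp, hwi]

end ElementaryEquiv

end Matrix

section StableRange

variable {S : Type*} [CommRing S] {ι : Type*} [Fintype ι] [DecidableEq ι]

theorem exists_add_sum_mul_notMem {v : ι → S} (hv : Ideal.span (Set.range v) = ⊤) (i : ι)
    {M : Ideal S} (hM : M ≠ ⊤) : ∃ c : ι → S, c i = 0 ∧ v i + ∑ j, v j * c j ∉ M := by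
  by_cases hvi : v i ∈ M
  · obtain ⟨j, hj⟩ : ∃ j, v j ∉ M := by
      by_contra! h
      exact hM (top_le_iff.1 (hv ▸ Ideal.span_le.2 (Set.range_subset_iff.2 h)))
    have hji : j ≠ i := by rintro rfl; exact hj hvi
    refine ⟨Pi.single j 1, Pi.single_eq_of_ne hji.symm 1, ?_⟩
    simpa [Pi.single_apply, M.add_mem_iff_right hvi] using hj
  · exact ⟨0, rfl, by simpa using hvi⟩

/-- Rings with finitely many maximal ideals have stable range one. -/
theorem exists_isUnit_add_sum_mul (hS : {M : Ideal S | M.IsMaximal}.Finite) {v : ι → S}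
    (hv : Ideal.span (Set.range v) = ⊤) (i : ι) :
    ∃ c : ι → S, c i = 0 ∧ IsUnit (v i + ∑ j, v j * c j) := by
  have := hS.to_subtype
  choose cM hcMi hcM using fun M : {M : Ideal S | M.IsMaximal} =>
    exists_add_sum_mul_notMem hv i M.2.ne_top
  have hcop : Pairwise (Function.onFun IsCoprime
      fun M : {M : Ideal S | M.IsMaximal} => (M : Ideal S)) := fun M M' hne =>
    Ideal.isCoprime_iff_sup_eq.2 (M.2.coprime_of_ne M'.2 (Subtype.coe_injective.ne hne))
  choose c hc using fun j => Ideal.exists_forall_sub_mem_ideal hcop fun M => cM M j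
  refine ⟨Function.update c i 0, Function.update_self _ _ _, ?_⟩
  by_contra hu
  obtain ⟨M, hM, hmem⟩ := exists_max_ideal_of_mem_nonunits hu
  apply hcM ⟨M, hM⟩
  have hdiff : ∀ j, Function.update c i 0 j - cM ⟨M, hM⟩ j ∈ M := by
    intro j
    rcases eq_or_ne j i with rfl | hj
    · simp [hcMi]
    · simpa [hj] using hc j ⟨M, hM⟩
  have hsub : (v i + ∑ j, v j * Function.update c i 0 j) -
      (v i + ∑ j, v j * cM ⟨M, hM⟩ j) ∈ M := by
    rw [add_sub_add_left_eq_sub, ← Finset.sum_sub_distrib]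
    exact M.sum_mem fun j _ => by rw [← mul_sub]; exact M.mul_mem_left _ (hdiff j)
  simpa only [sub_sub_cancel] using M.sub_mem hmem hsub

end StableRange

namespace Matrix

variable {ι : Type*} [DecidableEq ι] [Fintype ι]

theorem exists_mem_elementarySubgroup_row_eq {S : Type*} [CommRing S] [Nontrivial ι]
    (hS : {M : Ideal S | M.IsMaximal}.Finite) {v : ι → S} (hv : Ideal.span (Set.range v) = ⊤)
    (i : ι) : ∃ E ∈ elementarySubgroup ι S, (E : Matrix ι ι S) i = v := by
  obtain ⟨c, hci, hu⟩ := exists_isUnit_add_sum_mul hS hv i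
  have h := (ElementaryEquiv.add_single_sum i v c hci).trans
    (ElementaryEquiv.single_of_isUnit (i := i) (by simpa using hu))
  obtain ⟨E, hE, hEv⟩ := h.symm
  exact ⟨E, hE, by rwa [single_one_vecMul] at hEv⟩

theorem pi_elementarySubgroup_le_range {R : Type*} [CommRing R] {κ : Type*} [Finite κ]
    [DecidableEq κ] {I : κ → Ideal R} (hI : Pairwise (Function.onFun IsCoprime I)) :
    Subgroup.pi Set.univ (fun l => elementarySubgroup ι (R ⧸ I l)) ≤
      (MonoidHom.pi fun l => SpecialLinearGroup.map (Ideal.Quotient.mk (I l))).range := by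
  rw [Subgroup.pi_le_iff]
  intro l
  rw [Subgroup.map_le_iff_le_comap, elementarySubgroup, Subgroup.closure_le]
  rintro _ ⟨t, rfl⟩
  obtain ⟨r, hr⟩ := Ideal.pi_quotient_surjective hI (Pi.single l t.c)
  refine ⟨TransvectionStruct.toSL ⟨t.i, t.j, t.hij, r⟩, funext fun l' => Subtype.ext ?_⟩
  change (transvection t.i t.j r).map (Ideal.Quotient.mk (I l')) =
    ((Pi.mulSingle (M := fun l => SpecialLinearGroup ι (R ⧸ I l)) l t.toSL l' :) : Matrix _ _ _)
  rw [transvection_map, hr]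
  obtain rfl | hl := eq_or_ne l' l
  · rw [Pi.single_eq_same, Pi.mulSingle_eq_same]
    rfl
  · rw [Pi.single_eq_of_ne hl, transvection_zero, Pi.mulSingle_eq_of_ne hl]
    rfl

end Matrix

theorem Ideal.finite_setOf_isMaximal_quotient {R : Type*} [CommRing R] {I : Ideal R}
    (h : {M : Ideal R | M.IsMaximal ∧ I ≤ M}.Finite) :
    {M : Ideal (R ⧸ I) | M.IsMaximal}.Finite := by
  refine (h.preimage (Ideal.comap_injective_of_surjective _
    Ideal.Quotient.mk_surjective).injOn).subset fun M hM => ⟨?_, ?_⟩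
  · exact Ideal.comap_isMaximal_of_surjective _ Ideal.Quotient.mk_surjective (H := hM)
  · exact fun x hx => by simp [Ideal.Quotient.eq_zero_iff_mem.2 hx]

section GenProjSpace

variable {R : Type*} [CommRing R] {n : ℕ}

theorem IsUnitalVector.isUnit_zero {v : Fin 1 → R} (hv : IsUnitalVector v) : IsUnit (v 0) := by
  obtain ⟨c, hc⟩ := isUnitalVector_iff_exists_sum_mul_eq_one.1 hv
  rw [Fin.sum_univ_one] at hc
  exact .of_mul_eq_one_right _ hc

theorem quot_mk_projRel_eq_of_sub_mem {m : Fin n → ℕ} {I : Ideal R}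
    {a b : {v : Fin n → R // IsUnitalVector v}} (h : ∀ j, a.1 j - b.1 j ∈ I) :
    Quot.mk (ProjRel R m I) a = Quot.mk _ b :=
  Quot.sound ⟨1, by simp, fun j => by simpa using h j⟩

theorem GenProjSpace.subsingleton {m : Fin 1 → ℕ} (hm : m 0 = 1) (I : Ideal R) :
    Subsingleton (GenProjSpace R m I) := by
  refine ⟨fun x y => ?_⟩
  rcases x with ⟨a⟩
  rcases y with ⟨b⟩
  apply Quot.sound
  obtain ⟨u, hu⟩ := b.2.isUnit_zero
  refine ⟨a.1 0 * ↑u⁻¹, ?_, fun j => ?_⟩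
  · exact (Ideal.Quotient.mk I).isUnit_map (a.2.isUnit_zero.mul u⁻¹.isUnit)
  · rw [Subsingleton.elim j 0, hm, pow_one, ← hu, mul_assoc, Units.inv_mul, mul_one, sub_self]
    exact I.zero_mem

end GenProjSpace

/-- Let `R` be a commutative ring with unity and `I_0, …, I_k` mutually
co-maximal ideals of `R`, each contained in only finitely many maximal ideals. Let
`m^i_j ∈ ℕ` be such that for some permutation `σ` of `{0, …, k}` we have `m^i_{σ(i)} = 1`
for each `i`. Then the row map `SL_{k+1}(R) → ∏_{i=0}^{k} PF^{k,(m^i_0,…,m^i_k)}_{I_i}` is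
surjective.  (In particular this covers the case `m^i_j = 1` for all `i, j`, i.e. usual
projective spaces, via `σ = id`.) -/
theorem rowMap_surjective_of_perm {R : Type*} [CommRing R]
    (k : ℕ) (I : Fin (k + 1) → Ideal R)
    (hcomax : ∀ i j, i ≠ j → I i + I j = ⊤)
    (hfin : ∀ i, {M : Ideal R | M.IsMaximal ∧ I i ≤ M}.Finite)
    (m : Fin (k + 1) → Fin (k + 1) → ℕ)
    (σ : Equiv.Perm (Fin (k + 1))) (hσ : ∀ i, m i (σ i) = 1) :
    ∀ x : (i : Fin (k + 1)) → GenProjSpace R (m i) (I i),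
      ∃ A : Matrix.SpecialLinearGroup (Fin (k + 1)) R,
        ∃ h : ∀ i, IsUnitalVector (fun j => A.1 i j),
          ∀ i, Quot.mk (ProjRel R (m i) (I i)) ⟨fun j => A.1 i j, h i⟩ = x i := by
  intro x
  rcases k with _ | k
  · have hm : ∀ i, m i 0 = 1 := fun i => Fin.eq_zero (σ i) ▸ hσ i
    exact ⟨1, isUnitalVector_row 1, fun i => (GenProjSpace.subsingleton (hm i) (I i)).elim _ _⟩
  · choose a ha using fun i => Quot.exists_rep (x i)
    have hI : Pairwise (Function.onFun IsCoprime I) := fun i j hij =>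
      Ideal.isCoprime_iff_add.2 ((hcomax i j hij).trans Ideal.one_eq_top.symm)
    choose E hE hEa using fun i => exists_mem_elementarySubgroup_row_eq
      (Ideal.finite_setOf_isMaximal_quotient (hfin i))
      (isUnitalVector_iff_span_range.1 ((a i).2.map (Ideal.Quotient.mk (I i)))) i
    obtain ⟨A, hA⟩ := pi_elementarySubgroup_le_range hI ((Subgroup.mem_pi _).2 fun i _ => hE i)
    refine ⟨A, isUnitalVector_row A, fun i => ?_⟩
    rw [← ha i]
    refine quot_mk_projRel_eq_of_sub_mem fun j => Ideal.Quotient.eq.1 ?_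
    have hAE := congrFun (congrArg (fun B => (B i).1 i) hA) j
    simpa [hEa] using hAE
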